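/- Let σ ∈ O(V) be such that ker(id - σ) is one-dimensional with generator n, and let α ∈ V with ⟨n, α⟩ ≠ 0, with associated reflection s_α. Then id - σ s_α is invertible. -/

import Mathlib

/-!
If `σ s_α x = x`, put `y = s_α x`. Then `y - s_α y = y - σ y` lies on the line `ℝ ∙ α` and is
orthogonal to the `σ`-fixed vector `n`; as `⟪n, α⟫ ≠ 0` it vanishes. So `x` is fixed by `s_α`
and by `σ`, i.e. `x ∈ αᗮ ∩ ℝ ∙ n`, which is `0` again because `⟪n, α⟫ ≠ 0`.
-/

local notation "⟪" x ", " y "⟫_ℝ" => @inner ℝ _ _ x y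

noncomputable section

variable {V : Type*} [NormedAddCommGroup V] [InnerProductSpace ℝ V] [FiniteDimensional ℝ V]

/-- The orthogonal reflection in the hyperplane orthogonal to `v`. -/
def hrefl (v : V) : V ≃ₗᵢ[ℝ] V := Submodule.reflection (ℝ ∙ v)ᗮ

section

open Submodule

variable {𝕜 E : Type*} [RCLike 𝕜] [NormedAddCommGroup E] [InnerProductSpace 𝕜 E]

theorem LinearIsometry.inner_sub_apply_eq_zero_of_apply_eq (f : E →ₗᵢ[𝕜] E) {n : E}
    (hn : f n = n) (y : E) : inner 𝕜 n (y - f y) = 0 := by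
  rw [inner_sub_right]
  nth_rw 2 [← hn]
  rw [f.inner_map_map, sub_self]

theorem Submodule.sub_reflection_orthogonal_mem (K : Submodule 𝕜 E) [K.HasOrthogonalProjection]
    (y : E) : y - Kᗮ.reflection y ∈ K := by
  rw [reflection_orthogonal_apply, reflection_apply, sub_neg_eq_add, add_sub_cancel]
  exact nsmul_mem (K.starProjection_apply_mem y) 2

theorem eq_zero_of_mem_span_singleton_of_inner_eq_zero {u v w : E} (hw : w ∈ 𝕜 ∙ v)
    (huw : inner 𝕜 u w = 0) (huv : inner 𝕜 u v ≠ 0) : w = 0 := by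
  obtain ⟨t, rfl⟩ := mem_span_singleton.mp hw
  rw [inner_smul_right, mul_eq_zero] at huw
  rw [huw.resolve_right huv, zero_smul]

theorem reflection_eq_self_and_eq_self_of_apply_reflection_eq (σ : E ≃ₗᵢ[𝕜] E) {n α x : E}
    (hσn : σ n = n) (hnα : inner 𝕜 n α ≠ 0) (hx : σ ((𝕜 ∙ α)ᗮ.reflection x) = x) :
    (𝕜 ∙ α)ᗮ.reflection x = x ∧ σ x = x := by
  set y := (𝕜 ∙ α)ᗮ.reflection x
  have hsy : (𝕜 ∙ α)ᗮ.reflection y = x := reflection_reflection _ x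
  have hdiff : y - (𝕜 ∙ α)ᗮ.reflection y = 0 := by
    refine eq_zero_of_mem_span_singleton_of_inner_eq_zero
      ((𝕜 ∙ α).sub_reflection_orthogonal_mem y) ?_ hnα
    rw [hsy, ← hx]
    exact σ.toLinearIsometry.inner_sub_apply_eq_zero_of_apply_eq hσn y
  have hyx : y = x := by rwa [sub_eq_zero, hsy] at hdiff
  exact ⟨hyx, hyx ▸ hx⟩

end

theorem isUnit_id_sub_sigma_mul_reflection_general (σ : V ≃ₗᵢ[ℝ] V) (n : V)
    (hfix : LinearMap.ker ((1 : V →ₗ[ℝ] V) - σ.toLinearEquiv.toLinearMap) = ℝ ∙ n)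
    (α : V) (hnα : ⟪n, α⟫_ℝ ≠ 0) :
    IsUnit ((1 : V →ₗ[ℝ] V) - ((hrefl α).trans σ).toLinearEquiv.toLinearMap) := by
  have mem_fix_iff (v : V) : v ∈ ℝ ∙ n ↔ σ v = v := by
    rw [← hfix, LinearMap.mem_ker, LinearMap.sub_apply, Module.End.one_apply, sub_eq_zero, eq_comm]
    rfl
  rw [LinearMap.isUnit_iff_ker_eq_bot, LinearMap.ker_eq_bot']
  intro x hx
  obtain ⟨hsx, hσx⟩ := reflection_eq_self_and_eq_self_of_apply_reflection_eq σ
    ((mem_fix_iff n).mp (Submodule.mem_span_singleton_self n)) hnα (sub_eq_zero.mp hx).symm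
  have hαx : ⟪α, x⟫_ℝ = 0 :=
    Submodule.mem_orthogonal_singleton_iff_inner_right.mp
      ((Submodule.reflection_eq_self_iff x).mp hsx)
  exact eq_zero_of_mem_span_singleton_of_inner_eq_zero ((mem_fix_iff x).mpr hσx) hαx
    (by rwa [real_inner_comm])

/-- Let `σ` be an orthogonal transformation of `V` whose fixed point
space `ker(id - σ)` is the line spanned by `n ≠ 0`, and let `α` be a nonzero vector
with `⟪n, α⟫ ≠ 0`, with associated reflection `s_α`.  Then `id - σ s_α` is
invertible. -/
theorem isUnit_id_sub_sigma_mul_reflection (σ : V ≃ₗᵢ[ℝ] V) (n : V) (hn : n ≠ 0)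
    (hfix : LinearMap.ker ((1 : V →ₗ[ℝ] V) - σ.toLinearEquiv.toLinearMap) = ℝ ∙ n)
    (α : V) (hα : α ≠ 0) (hnα : ⟪n, α⟫_ℝ ≠ 0) :
    IsUnit ((1 : V →ₗ[ℝ] V) - ((hrefl α).trans σ).toLinearEquiv.toLinearMap) :=
  isUnit_id_sub_sigma_mul_reflection_general σ n hfix α hnα

end
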